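/- Let K be a CRG all of whose vertices are white and all of whose edges are black or gray. Suppose a_0, a_1, a_2, b_0, b_1, b_2 are six distinct vertices of K such that a_0, a_1, a_2 are pairwise joined by gray edges and, for all distinct indices i, j ∈ {0,1,2}, the vertices b_i and a_j are joined by a gray edge. Then H9 embeds in K. -/

import Mathlib

/-- Colors for edges of a colored regularity graph. -/
inductive EColor : Type
  | white
  | gray
  | black
deriving DecidableEq

/-- A colored regularity graph (CRG) on a finite vertex type `V`: each vertex is
white or black (`vWhite v = true` means white), and each pair of distinct vertices
gets a symmetric edge color (white, gray or black). -/
structure CRG (V : Type) [Fintype V] where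
  vWhite : V → Bool
  ecolor : V → V → EColor
  ecolor_symm : ∀ u v, ecolor u v = ecolor v u

namespace CRG

variable {V : Type} [Fintype V] [DecidableEq V]

/-- The matrix `M_K(p)`. -/
noncomputable def M (K : CRG V) (p : ℝ) (u v : V) : ℝ :=
  if u = v then (if K.vWhite u then p else 1 - p)
  else
    match K.ecolor u v with
    | EColor.white => p
    | EColor.black => 1 - p
    | EColor.gray => 0

/-- The function `g_K(p)`: the minimum of `xᵀ M_K(p) x` over nonnegative weight
vectors summing to `1`. -/
noncomputable def g (K : CRG V) (p : ℝ) : ℝ :=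
  sInf {r : ℝ | ∃ x : V → ℝ, (∀ v, 0 ≤ x v) ∧ (∑ v, x v) = 1 ∧
    r = ∑ u, ∑ v, x u * K.M p u v * x v}

/-- The sub-CRG induced on a subset `s` of the vertices. -/
def sub (K : CRG V) (s : Finset V) : CRG {v // v ∈ s} where
  vWhite := fun v => K.vWhite v.1
  ecolor := fun u v => K.ecolor u.1 v.1
  ecolor_symm := fun u v => K.ecolor_symm u.1 v.1

/-- `K` is `p`-core if `g_K(p) < g_{K'}(p)` for every proper (nonempty) sub-CRG `K'`. -/
def IsPCore (K : CRG V) (p : ℝ) : Prop :=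
  ∀ s : Finset V, s.Nonempty → s ≠ Finset.univ → K.g p < (K.sub s).g p

/-- `x` is an optimal weight vector for `K` at `p`. -/
def IsOptWeight (K : CRG V) (p : ℝ) (x : V → ℝ) : Prop :=
  (∀ v, 0 ≤ x v) ∧ (∑ v, x v) = 1 ∧
    (∑ u, ∑ v, x u * K.M p u v * x v) = K.g p

/-- The gray degree `d_G(v)`: total weight of gray neighbors of `v`. -/
noncomputable def dG (K : CRG V) (x : V → ℝ) (v : V) : ℝ :=
  ∑ w ∈ Finset.univ.filter fun w => w ≠ v ∧ K.ecolor v w = EColor.gray, x w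

/-- The white degree `d_W(v)`: total weight of white neighbors of `v`, including `v`
itself if `v` is white. -/
noncomputable def dW (K : CRG V) (x : V → ℝ) (v : V) : ℝ :=
  (∑ w ∈ Finset.univ.filter fun w => w ≠ v ∧ K.ecolor v w = EColor.white, x w) +
    (if K.vWhite v then x v else 0)

/-- The black degree `d_B(v)`: total weight of black neighbors of `v`, including `v`
itself if `v` is black. -/
noncomputable def dB (K : CRG V) (x : V → ℝ) (v : V) : ℝ :=
  (∑ w ∈ Finset.univ.filter fun w => w ≠ v ∧ K.ecolor v w = EColor.black, x w) +
    (if K.vWhite v then 0 else x v)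

/-- The number of gray neighbors of `v`. -/
def grayDeg (K : CRG V) (v : V) : ℕ :=
  (Finset.univ.filter fun w => w ≠ v ∧ K.ecolor v w = EColor.gray).card

end CRG

/-- A graph `H` embeds in a CRG `K`, written `H ↦ K`. -/
def EmbedsIn {α : Type*} {V : Type} [Fintype V] (H : SimpleGraph α) (K : CRG V) : Prop :=
  ∃ φ : α → V,
    (∀ a b : α, H.Adj a b →
      (φ a = φ b ∧ K.vWhite (φ a) = false) ∨
      (φ a ≠ φ b ∧ (K.ecolor (φ a) (φ b) = EColor.black ∨ K.ecolor (φ a) (φ b) = EColor.gray))) ∧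
    (∀ a b : α, a ≠ b → ¬H.Adj a b →
      (φ a = φ b ∧ K.vWhite (φ a) = true) ∨
      (φ a ≠ φ b ∧ (K.ecolor (φ a) (φ b) = EColor.white ∨ K.ecolor (φ a) (φ b) = EColor.gray)))

/-- The graph `H₉`: vertices `ℤ₉`, distinct `i,j` adjacent iff `i - j ≡ ±1, ±2 (mod 9)`
or `{i,j} ⊆ {0,3,6}`. -/
def H9 : SimpleGraph (ZMod 9) :=
  SimpleGraph.fromRel (fun i j =>
    i - j = 1 ∨ i - j = 2 ∨ (i ∈ ({0, 3, 6} : Set (ZMod 9)) ∧ j ∈ ({0, 3, 6} : Set (ZMod 9))))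

/-!
Send the nine vertices of `H9` to the six given vertices of `K`: `0, 3, 6 ↦ b 0, b 1, b 2` and
`1, 7 ↦ a 0`, `2, 5 ↦ a 1`, `4, 8 ↦ a 2`. Every fibre is an independent set of `H9`, which fits
since all vertices of `K` are white, and every edge of `K` is black or gray, so adjacent vertices
are fine as soon as their images differ. What remains is a finite check: distinct non-adjacent
vertices with different images land on a pair `a i a j` or `a i b j` with `i ≠ j`, which is gray.
-/

lemma embedsIn_of_ne_of_gray {α : Type*} {V : Type} [Fintype V] {H : SimpleGraph α} {K : CRG V}
    (hwhite : ∀ v, K.vWhite v = true) (hedges : ∀ u v, u ≠ v → K.ecolor u v ≠ .white)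
    (φ : α → V) (hadj : ∀ x y, H.Adj x y → φ x ≠ φ y)
    (hgray : ∀ x y, ¬H.Adj x y → φ x ≠ φ y → K.ecolor (φ x) (φ y) = .gray) :
    EmbedsIn H K := by
  refine ⟨φ, fun x y hxy => .inr ⟨hadj x y hxy, ?_⟩, fun x y _ hxy => ?_⟩
  · cases hc : K.ecolor (φ x) (φ y)
    · exact absurd hc (hedges _ _ (hadj x y hxy))
    · exact .inr rfl
    · exact .inl rfl
  · by_cases h : φ x = φ y
    · exact .inl ⟨h, hwhite _⟩
    · exact .inr ⟨h, .inr (hgray x y hxy h)⟩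

lemma H9_adj_iff (x y : ZMod 9) :
    H9.Adj x y ↔ x ≠ y ∧ (x - y = 1 ∨ x - y = 2 ∨ y - x = 1 ∨ y - x = 2 ∨
      (x ∈ ({0, 3, 6} : Finset (ZMod 9)) ∧ y ∈ ({0, 3, 6} : Finset (ZMod 9)))) := by
  simp only [H9, SimpleGraph.fromRel_adj, Set.mem_insert_iff, Set.mem_singleton_iff,
    Finset.mem_insert, Finset.mem_singleton]
  tauto

instance : DecidableRel H9.Adj := fun x y => decidable_of_iff' _ (H9_adj_iff x y)

/-- `Sum.inl i` stands for `a i` and `Sum.inr j` for `b j`. -/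
def ConfigGray : Fin 3 ⊕ Fin 3 → Fin 3 ⊕ Fin 3 → Prop
  | .inl i, .inl j => i ≠ j
  | .inl i, .inr j => i ≠ j
  | .inr i, .inl j => i ≠ j
  | .inr _, .inr _ => False

instance : DecidableRel ConfigGray
  | .inl _, .inl _ | .inl _, .inr _ | .inr _, .inl _ => inferInstanceAs (Decidable (_ ≠ _))
  | .inr _, .inr _ => inferInstanceAs (Decidable False)

def H9ToConfig : ZMod 9 → Fin 3 ⊕ Fin 3 :=
  ![.inr 0, .inl 0, .inl 1, .inr 1, .inl 2, .inl 1, .inr 2, .inl 0, .inl 2]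

lemma H9ToConfig_ne_of_adj : ∀ x y, H9.Adj x y → H9ToConfig x ≠ H9ToConfig y := by
  decide

lemma configGray_H9ToConfig_of_not_adj : ∀ x y, ¬H9.Adj x y →
    H9ToConfig x ≠ H9ToConfig y → ConfigGray (H9ToConfig x) (H9ToConfig y) := by
  decide

lemma ecolor_sumElim_eq_gray {V : Type} [Fintype V] {K : CRG V} {a b : Fin 3 → V}
    (hagray : ∀ i j, i ≠ j → K.ecolor (a i) (a j) = .gray)
    (hbagray : ∀ i j, i ≠ j → K.ecolor (b i) (a j) = .gray) :
    ∀ u v, ConfigGray u v → K.ecolor (Sum.elim a b u) (Sum.elim a b v) = .gray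
  | .inl i, .inl j, h => hagray i j h
  | .inl i, .inr j, h => (K.ecolor_symm _ _).trans (hbagray j i (Ne.symm h))
  | .inr i, .inl j, h => hbagray i j h

theorem H9_embeds_of_gray_triangle_config_general {V : Type} [Fintype V]
    (K : CRG V)
    (hwhite : ∀ v : V, K.vWhite v = true)
    (hedges : ∀ u v : V, u ≠ v → K.ecolor u v ≠ EColor.white)
    (a b : Fin 3 → V)
    (hainj : Function.Injective a) (hbinj : Function.Injective b)
    (hab : ∀ i j : Fin 3, a i ≠ b j)
    (hagray : ∀ i j : Fin 3, i ≠ j → K.ecolor (a i) (a j) = EColor.gray)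
    (hbagray : ∀ i j : Fin 3, i ≠ j → K.ecolor (b i) (a j) = EColor.gray) :
    EmbedsIn H9 K := by
  have hinj : Function.Injective (Sum.elim a b) := hainj.sumElim hbinj hab
  refine embedsIn_of_ne_of_gray hwhite hedges (Sum.elim a b ∘ H9ToConfig)
    (fun x y hxy => hinj.ne (H9ToConfig_ne_of_adj x y hxy)) fun x y hxy hne => ?_
  have hne' : H9ToConfig x ≠ H9ToConfig y := fun h => hne (congrArg (Sum.elim a b) h)
  exact ecolor_sumElim_eq_gray hagray hbagray _ _
    (configGray_H9ToConfig_of_not_adj x y hxy hne')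

theorem H9_embeds_of_gray_triangle_config {V : Type} [Fintype V] [DecidableEq V]
    (K : CRG V)
    (hwhite : ∀ v : V, K.vWhite v = true)
    (hedges : ∀ u v : V, u ≠ v → K.ecolor u v ≠ EColor.white)
    (a b : Fin 3 → V)
    (hainj : Function.Injective a) (hbinj : Function.Injective b)
    (hab : ∀ i j : Fin 3, a i ≠ b j)
    (hagray : ∀ i j : Fin 3, i ≠ j → K.ecolor (a i) (a j) = EColor.gray)
    (hbagray : ∀ i j : Fin 3, i ≠ j → K.ecolor (b i) (a j) = EColor.gray) :
    EmbedsIn H9 K :=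
  H9_embeds_of_gray_triangle_config_general K hwhite hedges a b hainj hbinj hab hagray hbagray
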